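/- Let T : [0,∞) → [1,∞) be an increasing surjective function extending tetration of 2 (i.e., T(n) = ⁿ2 for every natural number n), and let slog : [1,∞) → [0,∞) be its inverse. Then for every natural number n ≥ 2, log*(ⁿ2) − log⊛(ⁿ2) ≥ slog(2n/3). -/

import Mathlib

/-!
Along the tower `ⁿ2` every iterated logarithm is again a tower: `log^[k](ⁿ2) = ⁿ⁻ᵏ2` for `k ≤ n`.
Hence `log*(ⁿ2) = n`, while `k = log⊛(ⁿ2)` satisfies `k ≤ ʲ2` for `j = n - k`. Then
`n = j + k ≤ j + ʲ2 ≤ (3/2)·ʲ2` because `2j ≤ ʲ2`, so `2n/3 ≤ T j` and `slog(2n/3) ≤ j`.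
-/

noncomputable def lg (x : ℝ) : ℝ := Real.logb 2 (max 1 x)

noncomputable def logStar (α : ℝ) : ℕ := sInf {k : ℕ | lg^[k] α ≤ 1}

noncomputable def logCirc (α : ℝ) : ℕ := sSup {k : ℕ | (k : ℝ) ≤ lg^[k] α}

/-- Tetration of 2: `⁰2 = 1`, `ⁿ⁺¹2 = 2^(ⁿ2)`. -/
def tet : ℕ → ℕ
  | 0 => 1
  | n + 1 => 2 ^ tet n

lemma lt_tet (m : ℕ) : m < tet m := by
  induction m with
  | zero => simp [tet]
  | succ m ih => exact lt_of_le_of_lt ih (Nat.lt_two_pow_self (n := tet m))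

lemma two_mul_le_tet (m : ℕ) : 2 * m ≤ tet m := by
  cases m with
  | zero => simp [tet]
  | succ m =>
    calc 2 * (m + 1) ≤ 2 ^ (m + 1) := by
          rw [pow_succ]; linarith [Nat.lt_two_pow_self (n := m)]
      _ ≤ 2 ^ tet m := Nat.pow_le_pow_right two_pos (lt_tet m)

lemma lg_of_le_one {x : ℝ} (hx : x ≤ 1) : lg x = 0 := by
  simp [lg, max_eq_left hx]

lemma lg_two_pow (m : ℕ) : lg (2 ^ m) = m := by
  rw [lg, max_eq_right (one_le_pow₀ one_le_two), Real.logb_pow, Real.logb_self_eq_one one_lt_two,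
    mul_one]

lemma lg_tet_succ (m : ℕ) : lg (tet (m + 1)) = tet m := by
  rw [tet, Nat.cast_pow, Nat.cast_ofNat, lg_two_pow]

lemma iterate_lg_tet {k n : ℕ} (h : k ≤ n) : lg^[k] (tet n) = tet (n - k) := by
  induction k generalizing n with
  | zero => rfl
  | succ k ih =>
    obtain ⟨m, rfl⟩ := Nat.exists_eq_add_of_lt h
    rw [Function.iterate_succ_apply, show k + m + 1 = m + k + 1 by omega, lg_tet_succ,
      ih (by omega)]
    congr 2
    omega

lemma iterate_lg_tet_of_lt {k n : ℕ} (h : n < k) : lg^[k] (tet n) = 0 := by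
  obtain ⟨m, rfl⟩ := Nat.exists_eq_add_of_lt h
  have hlg_zero : lg 0 = 0 := lg_of_le_one zero_le_one
  rw [show n + m + 1 = m + 1 + n by omega, Function.iterate_add_apply, iterate_lg_tet le_rfl,
    Nat.sub_self, Function.iterate_succ_apply, tet, Nat.cast_one, lg_of_le_one le_rfl,
    Function.iterate_fixed hlg_zero]

lemma logStar_tet (n : ℕ) : logStar (tet n) = n := by
  have hn_mem : n ∈ {k : ℕ | lg^[k] (tet n) ≤ 1} := by
    simp [iterate_lg_tet le_rfl, tet]
  refine le_antisymm (Nat.sInf_le hn_mem) (le_csInf ⟨n, hn_mem⟩ fun k hk => ?_)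
  by_contra! hkn
  have hk' : tet (n - k) ≤ 1 := by
    rwa [Set.mem_ofPred_eq, iterate_lg_tet hkn.le, Nat.cast_le_one] at hk
  have := lt_tet (n - k)
  omega

lemma le_of_le_iterate_lg_tet {k n : ℕ} (hk : (k : ℝ) ≤ lg^[k] (tet n)) :
    k ≤ n ∧ k ≤ tet (n - k) := by
  have hkn : k ≤ n := by
    by_contra! hnk
    rw [iterate_lg_tet_of_lt hnk] at hk
    exact absurd hk (by exact_mod_cast (by omega : ¬ k ≤ 0))
  rw [iterate_lg_tet hkn] at hk
  exact ⟨hkn, by exact_mod_cast hk⟩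

lemma logCirc_tet_le (n : ℕ) :
    logCirc (tet n) ≤ n ∧ logCirc (tet n) ≤ tet (n - logCirc (tet n)) := by
  have hzero_mem : 0 ∈ {k : ℕ | (k : ℝ) ≤ lg^[k] (tet n)} := by simp
  exact le_of_le_iterate_lg_tet <|
    Nat.sSup_mem ⟨0, hzero_mem⟩ ⟨n, fun _ hk => (le_of_le_iterate_lg_tet hk).1⟩

theorem stmt1_general (T slog : ℝ → ℝ)
    (hT_mono : StrictMonoOn T (Set.Ici (0 : ℝ)))
    (hT_surj : ∀ y ∈ Set.Ici (1 : ℝ), ∃ x ∈ Set.Ici (0 : ℝ), T x = y)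
    (hT_tet : ∀ n : ℕ, T n = tet n)
    (hslog_left : ∀ x ∈ Set.Ici (0 : ℝ), slog (T x) = x)
    (n : ℕ) (hn : 2 ≤ n) :
    slog (2 * n / 3) ≤ (logStar (tet n) : ℝ) - (logCirc (tet n) : ℝ) := by
  obtain ⟨hkn, hk⟩ := logCirc_tet_le n
  set j := n - logCirc (tet n) with hj
  have hdiff : (logStar (tet n) : ℝ) - logCirc (tet n) = j := by
    rw [logStar_tet, hj, Nat.cast_sub hkn]
  have hle_tet : 2 * (n : ℝ) / 3 ≤ T j := by
    have := two_mul_le_tet j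
    rw [hT_tet, div_le_iff₀ three_pos]
    exact_mod_cast (by omega : 2 * n ≤ tet j * 3)
  obtain ⟨x, hx, hTx⟩ := hT_surj (2 * n / 3) <| Set.mem_Ici.mpr <| by
    rw [le_div_iff₀ three_pos]; exact_mod_cast (by omega : 1 * 3 ≤ 2 * n)
  rw [hdiff, ← hTx, hslog_left x hx]
  rw [← hTx] at hle_tet
  exact (hT_mono.le_iff_le hx (Set.mem_Ici.mpr j.cast_nonneg)).mp hle_tet

theorem stmt1 (T slog : ℝ → ℝ)
    (hT_mono : StrictMonoOn T (Set.Ici (0 : ℝ)))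
    (hT_mem : ∀ x ∈ Set.Ici (0 : ℝ), T x ∈ Set.Ici (1 : ℝ))
    (hT_surj : ∀ y ∈ Set.Ici (1 : ℝ), ∃ x ∈ Set.Ici (0 : ℝ), T x = y)
    (hT_tet : ∀ n : ℕ, T n = tet n)
    (hslog_left : ∀ x ∈ Set.Ici (0 : ℝ), slog (T x) = x)
    (hslog_right : ∀ y ∈ Set.Ici (1 : ℝ), T (slog y) = y)
    (n : ℕ) (hn : 2 ≤ n) :
    slog (2 * n / 3) ≤ (logStar (tet n) : ℝ) - (logCirc (tet n) : ℝ) :=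
  stmt1_general T slog hT_mono hT_surj hT_tet hslog_left n hn
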